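/- Let V be a 4-dimensional oriented inner product space with g making ((1/k)e_1, e_2, e_3, e_4) orthonormal (k>0), and let ω = a e^{12} + b e^{13} - 2c e^{14} + c e^{23}. Then the associated endomorphism J, defined by ω(X,Y) = g(JX,Y), satisfies J² = -Id if and only if a = b = 0, c² = 1, and k² = 4. -/
import Mathlib


/-- The 2-form ω = a e^{12} + b e^{13} - 2c e^{14} + c e^{23}. -/
def om (a b c : ℝ) (X Y : Fin 4 → ℝ) : ℝ :=
  a * (X 0 * Y 1 - X 1 * Y 0) + b * (X 0 * Y 2 - X 2 * Y 0) +
  (-2 * c) * (X 0 * Y 3 - X 3 * Y 0) + c * (X 1 * Y 2 - X 2 * Y 1)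

/-- The metric making ((1/k)e1, e2, e3, e4) orthonormal, i.e. g(e1,e1)=k². -/
def gk (k : ℝ) (X Y : Fin 4 → ℝ) : ℝ :=
  k ^ 2 * (X 0 * Y 0) + X 1 * Y 1 + X 2 * Y 2 + X 3 * Y 3

/-- with J determined by g(JX,Y)=ω(X,Y), one has J²=-Id iff
a = b = 0, c² = 1 and k² = 4. -/
theorem stmt_15 (a b c k : ℝ) (hk : 0 < k)
    (J : (Fin 4 → ℝ) →ₗ[ℝ] (Fin 4 → ℝ))
    (hJ : ∀ X Y : Fin 4 → ℝ, gk k (J X) Y = om a b c X Y) :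
    (∀ X : Fin 4 → ℝ, J (J X) = -X) ↔
      (a = 0 ∧ b = 0 ∧ c ^ 2 = 1 ∧ k ^ 2 = 4) := by
  have hk2 : k ^ 2 ≠ 0 := by positivity
  have h0 : ∀ X : Fin 4 → ℝ, (J X) 0 * k ^ 2 = -(a * X 1) - b * X 2 + 2 * c * X 3 := by
    intro X
    have := hJ X (Pi.single 0 1)
    simp [gk, om, Pi.single_apply] at this
    linarith
  have h1 : ∀ X : Fin 4 → ℝ, (J X) 1 = a * X 0 - c * X 2 := by
    intro X
    have := hJ X (Pi.single 1 1)
    simp [gk, om, Pi.single_apply] at this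
    linarith
  have h2 : ∀ X : Fin 4 → ℝ, (J X) 2 = b * X 0 + c * X 1 := by
    intro X
    have := hJ X (Pi.single 2 1)
    simp [gk, om, Pi.single_apply] at this
    linarith
  have h3 : ∀ X : Fin 4 → ℝ, (J X) 3 = -2 * c * X 0 := by
    intro X
    have := hJ X (Pi.single 3 1)
    simp [gk, om, Pi.single_apply] at this
    linarith
  constructor
  · intro h
    have he0 := h (Pi.single 0 1)
    have he1 := h (Pi.single 1 1)
    have he3 := h (Pi.single 3 1)
    have e01 := h1 (Pi.single 0 1)
    have e02 := h2 (Pi.single 0 1); have e03 := h3 (Pi.single 0 1)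
    have e10 := h0 (Pi.single 1 1); have e12 := h2 (Pi.single 1 1)
    have e30 := h0 (Pi.single 3 1)
    simp [Pi.single_apply] at e01 e02 e03 e10 e12 e30
    have q0 : (J (J (Pi.single 0 1))) 0 = -1 := by
      rw [he0]; simp [Pi.single_apply]
    have q1 : (J (J (Pi.single 1 1))) 1 = -1 := by
      rw [he1]; simp [Pi.single_apply]
    have q3 : (J (J (Pi.single 3 1))) 3 = -1 := by
      rw [he3]; simp [Pi.single_apply]
    have r0 := h0 (J (Pi.single 0 1))
    have r1 := h1 (J (Pi.single 1 1))
    have r3 := h3 (J (Pi.single 3 1))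
    rw [q0] at r0; rw [q1] at r1; rw [q3] at r3
    rw [e01, e02, e03] at r0
    have hab : a ^ 2 + b ^ 2 + 4 * c ^ 2 = k ^ 2 := by linear_combination r0
    have hac : a ^ 2 + c ^ 2 * k ^ 2 = k ^ 2 := by
      linear_combination (k ^ 2) * r1 + a * e10 + (-(c * k ^ 2)) * e12
    have hck : 4 * c ^ 2 = k ^ 2 := by
      linear_combination (k ^ 2) * r3 + (-(2 * c)) * e30
    have ha : a = 0 ∧ b = 0 := by
      constructor <;> nlinarith [sq_nonneg a, sq_nonneg b]
    have hc : c ^ 2 = 1 := by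
      refine mul_right_cancel₀ hk2 ?_
      rw [ha.1] at hac; linarith
    exact ⟨ha.1, ha.2, hc, by linear_combination (-1 : ℝ) * hck + 4 * hc⟩
  · rintro ⟨ha, hb, hc, hk4⟩ X
    subst ha hb
    funext i
    fin_cases i
    · have h' := h0 (J X)
      rw [h1 X, h2 X, h3 X] at h'
      have hX0 : (J (J X)) 0 * k ^ 2 = -X 0 * k ^ 2 := by
        rw [h']; linear_combination (-(4 : ℝ) * X 0) * hc + X 0 * hk4
      have := mul_right_cancel₀ hk2 hX0
      simpa using this
    · have h' := h1 (J X)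
      rw [h2 X] at h'
      have : (J (J X)) 1 = -X 1 := by
        rw [h']; linear_combination (-X 1) * hc
      simpa using this
    · have h' := h2 (J X)
      rw [h1 X] at h'
      have : (J (J X)) 2 = -X 2 := by
        rw [h']; linear_combination (-X 2) * hc
      simpa using this
    · have h' := h3 (J X)
      have hJX0 : (J X) 0 * 4 = 2 * c * X 3 := by
        have := h0 X; rw [hk4] at this; linarith
      have : (J (J X)) 3 = -X 3 := by
        rw [h']; linear_combination (-(c / 2)) * hJX0 + (-X 3) * hc
      simpa using this
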